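/- Let ρ and ρ' be states on ℂ^d whose trace distance satisfies Tr(ρ − ρ')₊ ≤ δ for some δ > 0, let σ be a positive definite d×d matrix, and let ε ∈ (0,1) with ε + δ < 1. Then D̲_s^ε(ρ'‖σ) ≤ D̲_s^{ε+δ}(ρ‖σ). -/

import Mathlib

open Matrix
open scoped ComplexOrder

noncomputable section

/-- Positive part `C₊` of a Hermitian matrix, obtained by applying `x ↦ max x 0` to the
eigenvalues in a spectral decomposition (junk value `0` for non-Hermitian input). -/
def matPos {n : Type*} [Fintype n] [DecidableEq n] (A : Matrix n n ℂ) : Matrix n n ℂ :=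
  if hA : A.IsHermitian then
    (hA.eigenvectorUnitary : Matrix n n ℂ) *
      Matrix.diagonal (fun i => ((max (hA.eigenvalues i) 0 : ℝ) : ℂ)) *
      star (hA.eigenvectorUnitary : Matrix n n ℂ)
  else 0

/-- `Tr C₊` as a real number. -/
def trPos {n : Type*} [Fintype n] [DecidableEq n] (A : Matrix n n ℂ) : ℝ :=
  (matPos A).trace.re

/-- Spectral projection of a Hermitian matrix onto `[0, ∞)` (junk value `0` for
non-Hermitian input). -/
def projNonneg {n : Type*} [Fintype n] [DecidableEq n] (A : Matrix n n ℂ) : Matrix n n ℂ :=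
  if hA : A.IsHermitian then
    (hA.eigenvectorUnitary : Matrix n n ℂ) *
      Matrix.diagonal (fun i => if 0 ≤ hA.eigenvalues i then (1 : ℂ) else 0) *
      star (hA.eigenvectorUnitary : Matrix n n ℂ)
  else 0

/-- The information spectrum relative entropy `D̲_s^ε(ρ‖σ)`. -/
def Dlow {n : Type*} [Fintype n] [DecidableEq n] (ε : ℝ) (ρ σ : Matrix n n ℂ) : ℝ :=
  sSup {γ : ℝ | 1 - ε ≤ trPos (ρ - (2 : ℝ) ^ γ • σ)}

/-- The information spectrum relative entropy `D̄_s^ε(ρ‖σ)`. -/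
def Dhigh {n : Type*} [Fintype n] [DecidableEq n] (ε : ℝ) (ρ σ : Matrix n n ℂ) : ℝ :=
  sInf {γ : ℝ | trPos (ρ - (2 : ℝ) ^ γ • σ) ≤ ε}

/-!
`Tr X₊` is the maximum of `Re Tr (P X)` over `0 ≤ P ≤ 1`, attained at the spectral projection
of `X` onto `[0, ∞)`. Hence `X ↦ Tr X₊` is subadditive, and `Tr X₊ ≤ Tr (-X)₊` when `Tr X = 0`
(use `1 - P` against `-X`), so the trace distance is symmetric. Subadditivity gives
`Tr (ρ' - 2^γ σ)₊ ≤ Tr (ρ - 2^γ σ)₊ + δ`: every `γ` admissible for `D̲^ε(ρ'‖σ)` is admissible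
for `D̲^{ε+δ}(ρ‖σ)`. The suprema compare because the first set is nonempty
(`Tr (ρ' - 2^γ σ)₊ ≥ 1 - 2^γ Tr σ`) and the second is bounded above (`ρ ≤ 2^γ σ` for large `γ`,
as `σ` is positive definite, and then `Tr (ρ - 2^γ σ)₊ = 0`).
-/

section TracePositivePart

open scoped MatrixOrder

variable {n : Type*} [Fintype n] [DecidableEq n]

lemma matPos_eq_posPart {A : Matrix n n ℂ} (hA : A.IsHermitian) : matPos A = A⁺ := by
  rw [CFC.posPart_def, cfcₙ_eq_cfc, hA.cfc_eq, matPos, dif_pos hA, Matrix.IsHermitian.cfc,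
    Unitary.conjStarAlgAut_apply]
  rfl

lemma projNonneg_eq_cfc {A : Matrix n n ℂ} (hA : A.IsHermitian) :
    projNonneg A = cfc (fun x : ℝ => if 0 ≤ x then (1 : ℝ) else 0) A := by
  rw [hA.cfc_eq, projNonneg, dif_pos hA, Matrix.IsHermitian.cfc, Unitary.conjStarAlgAut_apply]
  congr! with i
  simp only [Function.comp_apply]
  split_ifs <;> simp

lemma projNonneg_nonneg {A : Matrix n n ℂ} (hA : A.IsHermitian) : 0 ≤ projNonneg A := by
  rw [projNonneg_eq_cfc hA]
  refine cfc_nonneg fun x _ => ?_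
  split_ifs <;> norm_num

lemma projNonneg_le_one {A : Matrix n n ℂ} (hA : A.IsHermitian) : projNonneg A ≤ 1 := by
  rw [projNonneg_eq_cfc hA]
  refine cfc_le_one _ _ fun x _ => ?_
  split_ifs <;> norm_num

lemma projNonneg_mul_self {A : Matrix n n ℂ} (hA : A.IsHermitian) : projNonneg A * A = A⁺ := by
  rw [projNonneg_eq_cfc hA, CFC.posPart_def, cfcₙ_eq_cfc]
  nth_rw 2 [← cfc_id' ℝ A]
  rw [← cfc_mul _ _ A ((finite_real_spectrum (A := A)).continuousOn _)]
  refine cfc_congr fun x _ => ?_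
  by_cases hx : 0 ≤ x <;> simp [hx, le_of_not_ge]

lemma re_trace_mul_nonneg {P X : Matrix n n ℂ} (hP : 0 ≤ P) (hX : 0 ≤ X) :
    0 ≤ (P * X).trace.re := by
  have hS : star (CFC.sqrt X) = CFC.sqrt X := (CFC.sqrt_nonneg X).isSelfAdjoint.star_eq
  have hconj : 0 ≤ star (CFC.sqrt X) * P * CFC.sqrt X := star_left_conjugate_nonneg hP _
  rw [hS] at hconj
  rw [← CFC.sqrt_mul_sqrt_self X hX, ← mul_assoc, Matrix.trace_mul_cycle]
  exact (Complex.nonneg_iff.mp hconj.posSemidef.trace_nonneg).1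

lemma re_trace_mul_le_mul_left {P X Y : Matrix n n ℂ} (hP : 0 ≤ P) (hXY : X ≤ Y) :
    (P * X).trace.re ≤ (P * Y).trace.re := by
  have := re_trace_mul_nonneg hP (sub_nonneg.2 hXY)
  rwa [Matrix.mul_sub, Matrix.trace_sub, Complex.sub_re, sub_nonneg] at this

lemma re_trace_mul_le_mul_right {P Q X : Matrix n n ℂ} (hPQ : P ≤ Q) (hX : 0 ≤ X) :
    (P * X).trace.re ≤ (Q * X).trace.re := by
  have := re_trace_mul_nonneg (sub_nonneg.2 hPQ) hX
  rwa [Matrix.sub_mul, Matrix.trace_sub, Complex.sub_re, sub_nonneg] at this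

lemma re_trace_mul_le_trPos {P X : Matrix n n ℂ} (hX : X.IsHermitian) (hP₀ : 0 ≤ P)
    (hP₁ : P ≤ 1) : (P * X).trace.re ≤ trPos X := by
  calc (P * X).trace.re ≤ (P * X⁺).trace.re := re_trace_mul_le_mul_left hP₀ CFC.le_posPart
    _ ≤ (1 * X⁺).trace.re := re_trace_mul_le_mul_right hP₁ (CFC.posPart_nonneg X)
    _ = trPos X := by rw [one_mul, trPos, matPos_eq_posPart hX]

lemma re_trace_projNonneg_mul {X : Matrix n n ℂ} (hX : X.IsHermitian) :
    (projNonneg X * X).trace.re = trPos X := by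
  rw [projNonneg_mul_self hX, trPos, matPos_eq_posPart hX]

lemma re_trace_le_trPos {X : Matrix n n ℂ} (hX : X.IsHermitian) : X.trace.re ≤ trPos X := by
  simpa using re_trace_mul_le_trPos hX zero_le_one le_rfl

lemma trPos_add_le {X Y : Matrix n n ℂ} (hX : X.IsHermitian) (hY : Y.IsHermitian) :
    trPos (X + Y) ≤ trPos X + trPos Y := by
  have hXY := hX.add hY
  rw [← re_trace_projNonneg_mul hXY, Matrix.mul_add, Matrix.trace_add, Complex.add_re]
  exact add_le_add (re_trace_mul_le_trPos hX (projNonneg_nonneg hXY) (projNonneg_le_one hXY))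
    (re_trace_mul_le_trPos hY (projNonneg_nonneg hXY) (projNonneg_le_one hXY))

lemma trPos_le_trPos_neg {X : Matrix n n ℂ} (hX : X.IsHermitian) (htr : X.trace = 0) :
    trPos X ≤ trPos (-X) := by
  have h₀ : 0 ≤ 1 - projNonneg X := sub_nonneg.2 (projNonneg_le_one hX)
  have h₁ : 1 - projNonneg X ≤ 1 := sub_le_self _ (projNonneg_nonneg hX)
  calc trPos X = ((1 - projNonneg X) * -X).trace.re := by
        rw [← re_trace_projNonneg_mul hX, Matrix.mul_neg, Matrix.sub_mul, Matrix.one_mul,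
          Matrix.trace_neg, Matrix.trace_sub, htr, zero_sub, neg_neg]
    _ ≤ trPos (-X) := re_trace_mul_le_trPos hX.neg h₀ h₁

lemma trPos_sub_le_trPos_sub_swap {X Y : Matrix n n ℂ} (hX : X.IsHermitian) (hY : Y.IsHermitian)
    (htr : X.trace = Y.trace) : trPos (Y - X) ≤ trPos (X - Y) := by
  simpa using trPos_le_trPos_neg (hY.sub hX) (by rw [Matrix.trace_sub, htr, sub_self])

lemma trPos_eq_zero {X : Matrix n n ℂ} (hX : X.IsHermitian) (hX₀ : X ≤ 0) : trPos X = 0 := by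
  rw [trPos, matPos_eq_posPart hX, (CFC.posPart_eq_zero_iff X hX).2 hX₀, Matrix.trace_zero,
    Complex.zero_re]

lemma exists_le_smul_of_posDef {A σ : Matrix n n ℂ} (hA : A.IsHermitian) (hσ : σ.PosDef) :
    ∃ c : ℝ, 0 < c ∧ ∀ t, c ≤ t → A ≤ t • σ := by
  rcases isEmpty_or_nonempty n with hn | hn
  · exact ⟨1, one_pos, fun t _ => (Subsingleton.elim A (t • σ)).le⟩
  obtain ⟨r, hr⟩ := (finite_real_spectrum (A := A)).bddAbove
  obtain ⟨m, hm, hmσ⟩ : ∃ m > 0, algebraMap ℝ _ m ≤ σ :=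
    (CFC.exists_pos_algebraMap_le_iff hσ.isHermitian).2 fun x hx =>
      (isStrictlyPositive_iff_posDef.2 hσ).spectrum_pos hx
  have hc : 0 < (max r 0 + 1) / m := by positivity
  refine ⟨_, hc, fun t ht => ?_⟩
  have hrt : max r 0 ≤ t * m := by
    rw [div_le_iff₀ hm] at ht
    linarith
  calc A ≤ algebraMap ℝ _ (max r 0) :=
        le_algebraMap_of_spectrum_le (fun x hx => (hr hx).trans (le_max_left _ _)) hA
    _ ≤ algebraMap ℝ _ (t * m) := algebraMap_mono _ hrt
    _ = t • algebraMap ℝ _ m := by rw [map_mul, Algebra.smul_def]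
    _ ≤ t • σ := smul_le_smul_of_nonneg_left hmσ (hc.le.trans ht)

end TracePositivePart

section InformationSpectrum

open scoped MatrixOrder

variable {n : Type*} [Fintype n] [DecidableEq n]

lemma bddAbove_setOf_le_trPos {ρ σ : Matrix n n ℂ} (hρ : ρ.IsHermitian) (hσ : σ.PosDef)
    {ε : ℝ} (hε : ε < 1) : BddAbove {γ : ℝ | 1 - ε ≤ trPos (ρ - (2 : ℝ) ^ γ • σ)} := by
  obtain ⟨c, hc, hle⟩ := exists_le_smul_of_posDef hρ hσ
  refine ⟨Real.logb 2 c, fun γ hγ => ?_⟩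
  by_contra! hlt
  have hcγ : c ≤ (2 : ℝ) ^ γ := by
    rw [← Real.rpow_logb two_pos (by norm_num) hc]
    exact Real.rpow_le_rpow_of_exponent_le one_le_two hlt.le
  have hzero := trPos_eq_zero (hρ.sub (hσ.posSemidef.smul (by positivity)).isHermitian)
    (sub_nonpos.2 (hle _ hcγ))
  simp only [Set.mem_ofPred_eq, hzero] at hγ
  linarith

lemma nonempty_setOf_le_trPos {ρ σ : Matrix n n ℂ} (hρ : ρ.IsHermitian) (hρtr : ρ.trace = 1)
    (hσ : σ.PosSemidef) {ε : ℝ} (hε : 0 < ε) :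
    {γ : ℝ | 1 - ε ≤ trPos (ρ - (2 : ℝ) ^ γ • σ)}.Nonempty := by
  obtain ⟨γ, hγ⟩ : ∃ γ : ℝ, (2 : ℝ) ^ γ * σ.trace.re < ε := by
    have := (tendsto_rpow_atBot_of_base_gt_one 2 one_lt_two).mul_const σ.trace.re
    rw [zero_mul] at this
    exact (this.eventually (gt_mem_nhds hε)).exists
  refine ⟨γ, le_trans ?_ (re_trace_le_trPos (hρ.sub (hσ.smul (by positivity)).isHermitian))⟩
  rw [Matrix.trace_sub, Matrix.trace_smul, hρtr, Complex.sub_re, Complex.one_re, Complex.smul_re,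
    smul_eq_mul]
  linarith

lemma setOf_le_trPos_subset {ρ ρ' σ : Matrix n n ℂ} (hρ : ρ.IsHermitian) (hρ' : ρ'.IsHermitian)
    (hσ : σ.IsHermitian) {δ : ℝ} (hdist : trPos (ρ' - ρ) ≤ δ) (ε : ℝ) :
    {γ : ℝ | 1 - ε ≤ trPos (ρ' - (2 : ℝ) ^ γ • σ)} ⊆
      {γ : ℝ | 1 - (ε + δ) ≤ trPos (ρ - (2 : ℝ) ^ γ • σ)} := by
  intro γ hγ
  have hsplit : ρ' - (2 : ℝ) ^ γ • σ = (ρ - (2 : ℝ) ^ γ • σ) + (ρ' - ρ) := by abel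
  have hadd := trPos_add_le (hρ.sub (hσ.smul (IsSelfAdjoint.all ((2 : ℝ) ^ γ)))) (hρ'.sub hρ)
  simp only [Set.mem_ofPred_eq, hsplit] at hγ ⊢
  linarith

end InformationSpectrum

theorem Dlow_perturbation_general {d : ℕ} (ρ ρ' σ : Matrix (Fin d) (Fin d) ℂ)
    (hρ : ρ.PosSemidef) (hρtr : ρ.trace = 1)
    (hρ' : ρ'.PosSemidef) (hρ'tr : ρ'.trace = 1)
    (hσ : σ.PosDef) (δ : ℝ) (hdist : trPos (ρ - ρ') ≤ δ)
    (ε : ℝ) (hε0 : 0 < ε) (hεδ : ε + δ < 1) :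
    Dlow ε ρ' σ ≤ Dlow (ε + δ) ρ σ := by
  have hdist' : trPos (ρ' - ρ) ≤ δ :=
    (trPos_sub_le_trPos_sub_swap hρ.isHermitian hρ'.isHermitian (hρtr.trans hρ'tr.symm)).trans
      hdist
  exact csSup_le_csSup (bddAbove_setOf_le_trPos hρ.isHermitian hσ hεδ)
    (nonempty_setOf_le_trPos hρ'.isHermitian hρ'tr hσ.posSemidef hε0)
    (setOf_le_trPos_subset hρ.isHermitian hρ'.isHermitian hσ.isHermitian hdist' ε)

/-- If the trace distance `Tr(ρ − ρ')₊` of two states is at most `δ`, then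
`D̲_s^ε(ρ'‖σ) ≤ D̲_s^{ε+δ}(ρ‖σ)`. -/
theorem Dlow_perturbation {d : ℕ} (ρ ρ' σ : Matrix (Fin d) (Fin d) ℂ)
    (hρ : ρ.PosSemidef) (hρtr : ρ.trace = 1)
    (hρ' : ρ'.PosSemidef) (hρ'tr : ρ'.trace = 1)
    (hσ : σ.PosDef) (δ : ℝ) (hδ : 0 < δ) (hdist : trPos (ρ - ρ') ≤ δ)
    (ε : ℝ) (hε0 : 0 < ε) (hε1 : ε < 1) (hεδ : ε + δ < 1) :
    Dlow ε ρ' σ ≤ Dlow (ε + δ) ρ σ :=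
  Dlow_perturbation_general ρ ρ' σ hρ hρtr hρ' hρ'tr hσ δ hdist ε hε0 hεδ
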